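/- arXiv:math/0703929 — 4 statements merged into one kernel-verified Lean document; each statement's English description precedes it below -/
import Mathlib

section
/- Let J ⊆ {1,…,n} have cardinality p ≥ 1 and let α_i(J) = |J ∩ {1,…,i}| / i for 1 ≤ i ≤ n. Then every nonzero value appears in the sequence α_1(J), …, α_n(J) at most p times; that is, for every rational c ≠ 0, the set {i ∈ {1,…,n} : α_i(J) = c} has cardinality at most p. -/
theorem density_multiplicity (n p : ℕ) (hp : 1 ≤ p) (hpn : p ≤ n)
    (J : Finset ℕ) (hJ : J ⊆ Finset.Icc 1 n) (hcard : J.card = p)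
    (c : ℚ) (hc : c ≠ 0) :
    ((Finset.Icc 1 n).filter
      (fun i => ((J ∩ Finset.Icc 1 i).card : ℚ) / i = c)).card ≤ p := by
  set S := (Finset.Icc 1 n).filter
      (fun i => ((J ∩ Finset.Icc 1 i).card : ℚ) / i = c) with hS
  have key : ∀ i ∈ S, ((J ∩ Finset.Icc 1 i).card : ℚ) = c * i := by
    intro i hi
    simp only [hS, Finset.mem_filter, Finset.mem_Icc] at hi
    have hi0 : (i : ℚ) ≠ 0 := by
      have : 1 ≤ i := hi.1.1
      exact_mod_cast by omega
    field_simp at hi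
    linarith [hi.2]
  calc S.card ≤ (Finset.Icc 1 p).card := by
        apply Finset.card_le_card_of_injOn (fun i => (J ∩ Finset.Icc 1 i).card)
        · intro i hi
          have hk := key i hi
          simp only [hS, Finset.mem_coe, Finset.mem_filter, Finset.mem_Icc] at hi
          have hle : (J ∩ Finset.Icc 1 i).card ≤ p := by
            rw [← hcard]; exact Finset.card_le_card (Finset.inter_subset_left)
          have hne : (J ∩ Finset.Icc 1 i).card ≠ 0 := by
            intro h0
            rw [h0] at hk
            have hi0 : (i : ℚ) ≠ 0 := by
              have : 1 ≤ i := hi.1.1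
              exact_mod_cast by omega
            exact hc (by rw [Nat.cast_zero] at hk; exact (mul_eq_zero.mp hk.symm).resolve_right hi0)
          simp only [Finset.mem_coe, Finset.mem_Icc]
          omega
        · intro i hi j hj hij
          have hki := key i hi
          have hkj := key j hj
          have hij' : (J ∩ Finset.Icc 1 i).card = (J ∩ Finset.Icc 1 j).card := hij
          rw [hij', hkj] at hki
          exact_mod_cast (mul_left_cancel₀ hc hki).symm
    _ = p := by simp
end

section
/- Let J ⊆ {1,…,n} have cardinality p and define q'_i = 2|J ∩ {1,…,i}| − i for 0 ≤ i ≤ n. Then every value appears in the sequence q'_0, q'_1, …, q'_n at most p+1 times: for every integer c, the set {i ∈ {0,…,n} : q'_i = c} has cardinality at most p+1. -/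
theorem qprime_multiplicity (n p : ℕ) (hpn : p ≤ n)
    (J : Finset ℕ) (hJ : J ⊆ Finset.Icc 1 n) (hcard : J.card = p) (c : ℤ) :
    ((Finset.range (n + 1)).filter
      (fun i => 2 * ((J ∩ Finset.Icc 1 i).card : ℤ) - i = c)).card ≤ p + 1 := by
  have := Finset.card_le_card_of_injOn
    (f := fun i => (J ∩ Finset.Icc 1 i).card)
    (s := (Finset.range (n + 1)).filter
      (fun i => 2 * ((J ∩ Finset.Icc 1 i).card : ℤ) - i = c))
    (t := Finset.range (p + 1))
    (by
      intro i hi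
      simp only [Finset.mem_coe, Finset.mem_range]
      have : (J ∩ Finset.Icc 1 i).card ≤ J.card :=
        Finset.card_le_card (Finset.inter_subset_left)
      omega)
    (by
      intro i hi j hj hij
      simp only [Finset.mem_coe, Finset.mem_filter] at hi hj
      have h1 := hi.2
      have h2 := hj.2
      simp only at hij
      rw [hij] at h1
      have : (i : ℤ) = j := by linarith
      exact_mod_cast this)
  simpa using this
end

section
/- Let q_0 < q_1 < ⋯ < q_n be distinct real numbers. Then the unique solution (β_0,…,β_n) of the polynomial identity Σ_{k=0}^n β_k (x − q_k)^n ≡ 1 (identity of polynomials in x) is given by β_k = (−1)^n · Π_{j ≠ k} (q_k − q_j)^{−1}. -/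
open Polynomial Finset

private lemma coeff_basis_top (n : ℕ) (q : Fin (n + 1) → ℝ) (hq : Function.Injective q)
    (k : Fin (n + 1)) :
    (Lagrange.basis Finset.univ q k).coeff n = ∏ j ∈ Finset.univ.erase k, (q k - q j)⁻¹ := by
  have hvs : Set.InjOn q (Finset.univ : Finset (Fin (n + 1))) := hq.injOn
  have hdeg : (Lagrange.basis Finset.univ q k).natDegree = n := by
    rw [Lagrange.natDegree_basis hvs (mem_univ k)]
    simp
  have hl : (Lagrange.basis Finset.univ q k).leadingCoeff
      = (Lagrange.basis Finset.univ q k).coeff n := by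
    rw [Polynomial.leadingCoeff, hdeg]
  rw [← hl, Lagrange.basis, leadingCoeff_prod]
  refine Finset.prod_congr rfl fun j hj => ?_
  rw [Lagrange.basisDivisor, leadingCoeff_mul, leadingCoeff_C,
    (monic_X_sub_C (q j)).leadingCoeff, mul_one]

private lemma lag_sum (n m : ℕ) (q : Fin (n + 1) → ℝ) (hq : Function.Injective q) (hm : m ≤ n) :
    ∑ k, (∏ j ∈ Finset.univ.erase k, (q k - q j)⁻¹) * q k ^ m
      = if m = n then 1 else 0 := by
  have hvs : Set.InjOn q (Finset.univ : Finset (Fin (n + 1))) := hq.injOn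
  have hdeg : ((X : ℝ[X]) ^ m).degree < ((Finset.univ : Finset (Fin (n + 1))).card : ℕ) := by
    rw [degree_X_pow, Finset.card_univ, Fintype.card_fin]
    exact_mod_cast Nat.lt_succ_of_le hm
  have h := Lagrange.eq_interpolate (f := (X : ℝ[X]) ^ m) hvs hdeg
  have h2 := congrArg (fun p => p.coeff n) h
  simp only [Lagrange.interpolate_apply, finset_sum_coeff, coeff_C_mul, eval_pow, eval_X,
    coeff_X_pow] at h2
  have h3 : ∀ k, (Lagrange.basis Finset.univ q k).coeff n
      = ∏ j ∈ Finset.univ.erase k, (q k - q j)⁻¹ := coeff_basis_top n q hq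
  simp_rw [h3] at h2
  rw [show ((if m = n then (1:ℝ) else 0) = if n = m then 1 else 0) by
    simp [eq_comm], h2]
  exact Finset.sum_congr rfl fun k _ => mul_comm _ _

private lemma sum_eq_one_iff (n : ℕ) (q β : Fin (n + 1) → ℝ) :
    (∑ k, C (β k) * (X - C (q k)) ^ n = 1) ↔
      ∀ m ≤ n, ∑ k, β k * q k ^ m = if m = n then (-1 : ℝ) ^ n else 0 := by
  have hcoeff : ∀ i, (∑ k, C (β k) * (X - C (q k)) ^ n).coeff i
      = ((-1 : ℝ) ^ (n - i) * n.choose i) * ∑ k, β k * q k ^ (n - i) := by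
    intro i
    rw [finset_sum_coeff, Finset.mul_sum]
    refine Finset.sum_congr rfl fun k _ => ?_
    rw [coeff_C_mul, sub_eq_add_neg, ← C_neg, coeff_X_add_C_pow, neg_pow]
    ring
  constructor
  · intro h m hm
    have := congrArg (fun p => p.coeff (n - m)) h
    simp only [hcoeff, coeff_one] at this
    rw [Nat.sub_sub_self hm] at this
    by_cases hmn : m = n
    · subst hmn
      simp only [Nat.sub_self, if_true, Nat.choose_zero_right, Nat.cast_one, mul_one] at this
      simp only [eq_self_iff_true, if_true] at this ⊢
      have h1 : ((-1 : ℝ) ^ m) * (-1 : ℝ) ^ m = 1 := by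
        rw [← mul_pow]; norm_num
      calc ∑ k, β k * q k ^ m = ((-1 : ℝ) ^ m * (-1 : ℝ) ^ m) * ∑ k, β k * q k ^ m := by
            rw [h1, one_mul]
        _ = (-1 : ℝ) ^ m * ((-1 : ℝ) ^ m * ∑ k, β k * q k ^ m) := by ring
        _ = (-1 : ℝ) ^ m := by rw [this, mul_one]
    · have hne : n - m ≠ 0 := by omega
      rw [if_neg hne] at this
      rw [if_neg hmn]
      have hc : ((-1 : ℝ) ^ m * (n.choose (n - m) : ℝ)) ≠ 0 := by
        apply mul_ne_zero
        · exact pow_ne_zero _ (by norm_num)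
        · exact_mod_cast (Nat.choose_pos (Nat.sub_le n m)).ne'
      exact (mul_eq_zero.mp this).resolve_left hc
  · intro h
    ext i
    rw [hcoeff i, coeff_one]
    by_cases hi : i ≤ n
    · have hkey := h (n - i) (Nat.sub_le n i)
      rw [hkey]
      by_cases hi0 : i = 0
      · subst hi0
        simp only [Nat.sub_zero, eq_self_iff_true, if_true, Nat.choose_zero_right]
        rw [mul_comm ((-1:ℝ)^n) _, mul_assoc, ← mul_pow]
        norm_num
      · have : n - i ≠ n := by omega
        rw [if_neg this, if_neg hi0, mul_zero]
    · rw [if_neg (by omega : ¬ i = 0)]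
      have : (n.choose i : ℝ) = 0 := by
        exact_mod_cast congrArg Nat.cast (Nat.choose_eq_zero_of_lt (by omega))
      rw [this, mul_zero, zero_mul]

theorem beta_formula (n : ℕ) (q : Fin (n + 1) → ℝ) (hq : StrictMono q)
    (β : Fin (n + 1) → ℝ) :
    (∑ k, Polynomial.C (β k) * (Polynomial.X - Polynomial.C (q k)) ^ n = 1) ↔
      ∀ k, β k = (-1 : ℝ) ^ n * ∏ j ∈ Finset.univ.erase k, (q k - q j)⁻¹ := by
  have hinj : Function.Injective q := hq.injective
  set βs : Fin (n + 1) → ℝ :=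
    fun k => (-1 : ℝ) ^ n * ∏ j ∈ Finset.univ.erase k, (q k - q j)⁻¹ with hβs
  have hs : ∀ m ≤ n, ∑ k, βs k * q k ^ m = if m = n then (-1 : ℝ) ^ n else 0 := by
    intro m hm
    simp_rw [hβs, mul_assoc, ← Finset.mul_sum, lag_sum n m q hinj hm]
    split <;> simp
  constructor
  · intro h
    have hb := (sum_eq_one_iff n q β).mp h
    -- Vandermonde injectivity
    have hdet : (Matrix.vandermonde q).det ≠ 0 := by
      rw [Matrix.det_vandermonde_ne_zero_iff]
      exact hinj
    have hunit : IsUnit (Matrix.vandermonde q) :=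
      (Matrix.isUnit_iff_isUnit_det _).mpr (isUnit_iff_ne_zero.mpr hdet)
    have hinjv := Matrix.vecMul_injective_iff_isUnit.mpr hunit
    have hveq : Matrix.vecMul β (Matrix.vandermonde q)
        = Matrix.vecMul βs (Matrix.vandermonde q) := by
      funext m
      have hm : (m : ℕ) ≤ n := Nat.lt_succ_iff.mp m.isLt
      simp only [Matrix.vecMul, dotProduct, Matrix.vandermonde, Matrix.of_apply]
      rw [hb (m : ℕ) hm, hs (m : ℕ) hm]
    have := hinjv hveq
    intro k
    rw [congrFun this k]
  · intro h
    have hβ : β = βs := funext h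
    rw [hβ]
    exact (sum_eq_one_iff n q βs).mpr hs
end

section
/- Let q_0, …, q_n be pairwise distinct real numbers with q_i < 0 for 0 ≤ i ≤ m and q_i ≥ 0 for m+1 ≤ i ≤ n. Setting β_k = (−1)^n Π_{j≠k}(q_k − q_j)^{−1}, the number r = Σ_{k=0}^{m} β_k (−q_k)^n = Σ_{i=0}^{m} Π_{j≠i} q_i/(q_i − q_j) lies in the interval [0, 1]. -/
open Finset

noncomputable def tauF (n : ℕ) (x : ℝ) : ℝ := if 0 ≤ x then x ^ n else 0

noncomputable def GG (n : ℕ) (q : Fin (n+1) → ℝ) (t : ℝ) : ℝ :=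
  ∑ i, tauF n (q i - t) * ∏ j ∈ Finset.univ.erase i, (q i - q j)⁻¹

lemma tauF_succ (n : ℕ) (x : ℝ) : tauF (n+1) x = x * tauF n x := by
  unfold tauF; split <;> ring

lemma tauF_nonneg (n : ℕ) (x : ℝ) : 0 ≤ tauF n x := by
  unfold tauF; split
  · positivity
  · exact le_refl 0

lemma tauF_zero_of_neg (n : ℕ) (x : ℝ) (h : x < 0) : tauF n x = 0 := by
  unfold tauF; rw [if_neg (not_le.mpr h)]

lemma tauF_of_nonneg (n : ℕ) (x : ℝ) (h : 0 ≤ x) : tauF n x = x ^ n := by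
  unfold tauF; rw [if_pos h]

lemma tauF_zero_of_nonpos (n : ℕ) (x : ℝ) (h : x ≤ 0) (hn : n ≠ 0) : tauF n x = 0 := by
  rcases lt_or_eq_of_le h with h | h
  · exact tauF_zero_of_neg n x h
  · subst h; unfold tauF; simp [zero_pow hn]

lemma prod_erase_castSucc (n : ℕ) (q : Fin (n+2) → ℝ) (hq : Function.Injective q)
    (k : Fin (n+1)) :
    (q k.castSucc - q (Fin.last (n+1))) *
        ∏ j ∈ (Finset.univ.erase k.castSucc), (q k.castSucc - q j)⁻¹
      = ∏ j ∈ Finset.univ.erase k, (q k.castSucc - q j.castSucc)⁻¹ := by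
  have hne : k.castSucc ≠ Fin.last (n+1) := Fin.castSucc_lt_last k |>.ne
  have hmem : Fin.last (n+1) ∈ Finset.univ.erase k.castSucc := by
    simp [Ne.symm hne]
  rw [← Finset.mul_prod_erase _ _ hmem, ← mul_assoc,
    mul_inv_cancel₀ (sub_ne_zero.mpr (fun h => hne (hq h))), one_mul]
  rw [Finset.prod_image (f := fun j => (q k.castSucc - q j)⁻¹)
    (g := Fin.castSucc) (fun a _ b _ h => Fin.castSucc_injective _ h) |>.symm]
  congr 1
  rw [Finset.image_erase (Fin.castSucc_injective _), Fin.image_castSucc,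
    Finset.compl_singleton, Finset.erase_right_comm]

lemma prod_erase_succ (n : ℕ) (q : Fin (n+2) → ℝ) (hq : Function.Injective q)
    (k : Fin (n+1)) :
    (q k.succ - q 0) *
        ∏ j ∈ (Finset.univ.erase k.succ), (q k.succ - q j)⁻¹
      = ∏ j ∈ Finset.univ.erase k, (q k.succ - q j.succ)⁻¹ := by
  have hne : k.succ ≠ 0 := Fin.succ_ne_zero k
  have hmem : (0 : Fin (n+2)) ∈ Finset.univ.erase k.succ := by
    simp [Ne.symm hne]
  rw [← Finset.mul_prod_erase _ _ hmem, ← mul_assoc,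
    mul_inv_cancel₀ (sub_ne_zero.mpr (fun h => hne (hq h))), one_mul]
  rw [Finset.prod_image (f := fun j => (q k.succ - q j)⁻¹)
    (g := Fin.succ) (fun a _ b _ h => Fin.succ_injective _ h) |>.symm]
  congr 1
  rw [Finset.image_erase (Fin.succ_injective _), Fin.image_succ_univ,
    Finset.compl_singleton, Finset.erase_right_comm]

lemma GG_rec (n : ℕ) (q : Fin (n+2) → ℝ) (hq : Function.Injective q) (t : ℝ) :
    (q (Fin.last (n+1)) - q 0) * GG (n+1) q t
      = (t - q 0) * GG n (q ∘ Fin.castSucc) t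
        + (q (Fin.last (n+1)) - t) * GG n (q ∘ Fin.succ) t := by
  have h1 : GG n (q ∘ Fin.castSucc) t
      = ∑ i : Fin (n+2), ((q i - q (Fin.last (n+1))) * tauF n (q i - t)) *
          ∏ j ∈ Finset.univ.erase i, (q i - q j)⁻¹ := by
    rw [Fin.sum_univ_castSucc
      (f := fun i => ((q i - q (Fin.last (n+1))) * tauF n (q i - t)) *
          ∏ j ∈ Finset.univ.erase i, (q i - q j)⁻¹)]
    rw [sub_self, zero_mul, zero_mul, add_zero, GG]
    refine Finset.sum_congr rfl fun k _ => ?_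
    simp only [Function.comp_apply]
    rw [← prod_erase_castSucc n q hq k]
    ring
  have h2 : GG n (q ∘ Fin.succ) t
      = ∑ i : Fin (n+2), ((q i - q 0) * tauF n (q i - t)) *
          ∏ j ∈ Finset.univ.erase i, (q i - q j)⁻¹ := by
    rw [Fin.sum_univ_succ
      (f := fun i => ((q i - q 0) * tauF n (q i - t)) *
          ∏ j ∈ Finset.univ.erase i, (q i - q j)⁻¹)]
    rw [sub_self, zero_mul, zero_mul, zero_add, GG]
    refine Finset.sum_congr rfl fun k _ => ?_
    simp only [Function.comp_apply]
    rw [← prod_erase_succ n q hq k]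
    ring
  rw [h1, h2, GG, Finset.mul_sum, Finset.mul_sum, Finset.mul_sum, ← Finset.sum_add_distrib]
  refine Finset.sum_congr rfl fun i _ => ?_
  rw [tauF_succ]
  ring

lemma GG_bounds : ∀ n (q : Fin (n+1) → ℝ), StrictMono q → ∀ t,
    (0 ≤ GG n q t ∧ GG n q t ≤ 1) ∧ (t ≤ q 0 → GG n q t = 1) := by
  intro n
  induction n with
  | zero =>
    intro q hq t
    have h0 : GG 0 q t = tauF 0 (q 0 - t) := by
      rw [GG]
      simp [Fin.sum_univ_one]
    constructor
    · rw [h0]; unfold tauF; split <;> norm_num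
    · intro ht
      rw [h0, tauF_of_nonneg _ _ (by linarith), pow_zero]
  | succ n ih =>
    intro q hq t
    have hinj := hq.injective
    have hab : q 0 < q (Fin.last (n+1)) := hq Fin.last_pos
    have hba : q (Fin.last (n+1)) - q 0 ≠ 0 := sub_ne_zero.mpr (ne_of_gt hab)
    have hc : StrictMono (q ∘ Fin.castSucc) := hq.comp Fin.strictMono_castSucc
    have hs : StrictMono (q ∘ Fin.succ) := hq.comp Fin.strictMono_succ
    have ihc := ih (q ∘ Fin.castSucc) hc t
    have ihs := ih (q ∘ Fin.succ) hs t
    have hrec := GG_rec n q hinj t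
    have hG : GG (n+1) q t
        = ((t - q 0) * GG n (q ∘ Fin.castSucc) t
            + (q (Fin.last (n+1)) - t) * GG n (q ∘ Fin.succ) t)
          / (q (Fin.last (n+1)) - q 0) := by
      rw [eq_div_iff hba]
      linear_combination hrec
    have clause2 : t ≤ q 0 → GG (n+1) q t = 1 := by
      intro ht
      have hA : GG n (q ∘ Fin.castSucc) t = 1 := by
        apply ihc.2
        simpa using ht
      have hB : GG n (q ∘ Fin.succ) t = 1 := by
        apply ihs.2
        have : q 0 < (q ∘ Fin.succ) 0 := hq (Fin.succ_pos 0)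
        linarith
      rw [hG, hA, hB, div_eq_one_iff_eq hba]
      ring
    refine ⟨?_, clause2⟩
    rcases le_or_gt t (q 0) with ht | ht
    · rw [clause2 ht]; norm_num
    rcases lt_or_ge (q (Fin.last (n+1))) t with ht2 | ht2
    · have h0 : GG (n+1) q t = 0 := by
        rw [GG]
        apply Finset.sum_eq_zero
        intro i _
        have : q i ≤ q (Fin.last (n+1)) := hq.monotone (Fin.le_last i)
        rw [tauF_zero_of_neg _ _ (by linarith), zero_mul]
      rw [h0]; norm_num
    · obtain ⟨⟨hA0, hA1⟩, -⟩ := ihc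
      obtain ⟨⟨hB0, hB1⟩, -⟩ := ihs
      rw [hG]
      constructor
      · apply div_nonneg _ (by linarith)
        have := mul_nonneg (le_of_lt (by linarith : (0:ℝ) < t - q 0)) hA0
        have := mul_nonneg (by linarith : (0:ℝ) ≤ q (Fin.last (n+1)) - t) hB0
        linarith
      · rw [div_le_one (by linarith)]
        nlinarith

lemma GG_perm (n : ℕ) (q : Fin (n+1) → ℝ) (σ : Equiv.Perm (Fin (n+1))) (t : ℝ) :
    GG n (q ∘ σ) t = GG n q t := by
  rw [GG, GG,
    ← Equiv.sum_comp σ (fun i => tauF n (q i - t) * ∏ j ∈ Finset.univ.erase i, (q i - q j)⁻¹)]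
  refine Finset.sum_congr rfl fun i _ => ?_
  simp only [Function.comp_apply]
  congr 1
  rw [← Finset.prod_image (f := fun j => (q (σ i) - q j)⁻¹) (g := σ)
    (fun a _ b _ h => σ.injective h)]
  congr 1
  rw [Finset.image_erase σ.injective, Finset.image_univ_equiv]

lemma GG_bounds' (n : ℕ) (q : Fin (n+1) → ℝ) (hq : Function.Injective q) (t : ℝ) :
    0 ≤ GG n q t ∧ GG n q t ≤ 1 := by
  have hmono : Monotone (q ∘ Tuple.sort q) := Tuple.monotone_sort q
  have hsm : StrictMono (q ∘ Tuple.sort q) :=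
    hmono.strictMono_of_injective (hq.comp (Tuple.sort q).injective)
  have h := (GG_bounds n (q ∘ Tuple.sort q) hsm t).1
  rwa [GG_perm] at h

theorem ratio_in_unit_interval (n m : ℕ) (hm : m ≤ n)
    (q : Fin (n + 1) → ℝ) (hinj : Function.Injective q)
    (hneg : ∀ i : Fin (n + 1), (i : ℕ) ≤ m → q i < 0)
    (hpos : ∀ i : Fin (n + 1), m < (i : ℕ) → 0 ≤ q i) :
    0 ≤ (∑ i ∈ Finset.univ.filter (fun i : Fin (n + 1) => (i : ℕ) ≤ m),
          ∏ j ∈ Finset.univ.erase i, q i / (q i - q j)) ∧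
      (∑ i ∈ Finset.univ.filter (fun i : Fin (n + 1) => (i : ℕ) ≤ m),
          ∏ j ∈ Finset.univ.erase i, q i / (q i - q j)) ≤ 1 := by
  rcases Nat.eq_zero_or_pos n with hn | hn
  · subst hn
    have hfilter : (Finset.univ.filter (fun i : Fin 1 => (i : ℕ) ≤ m)) = {0} := by
      refine Finset.eq_singleton_iff_unique_mem.mpr ⟨?_, ?_⟩
      · simp
      · intro x _; exact Subsingleton.elim x 0
    rw [hfilter, Finset.sum_singleton]
    simp
  · set q' : Fin (n+1) → ℝ := fun i => -q i with hq'
    have hinj' : Function.Injective q' := fun a b h => hinj (by simpa [hq'] using h)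
    have key : (∑ i ∈ Finset.univ.filter (fun i : Fin (n + 1) => (i : ℕ) ≤ m),
          ∏ j ∈ Finset.univ.erase i, q i / (q i - q j)) = GG n q' 0 := by
      rw [GG, ← Finset.sum_filter_add_sum_filter_not Finset.univ
        (fun i : Fin (n+1) => (i : ℕ) ≤ m)
        (fun i => tauF n (q' i - 0) * ∏ j ∈ Finset.univ.erase i, (q' i - q' j)⁻¹)]
      have hzero : ∑ i ∈ Finset.univ.filter (fun i : Fin (n+1) => ¬ (i : ℕ) ≤ m),
          tauF n (q' i - 0) * ∏ j ∈ Finset.univ.erase i, (q' i - q' j)⁻¹ = 0 := by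
        apply Finset.sum_eq_zero
        intro i hi
        have hqi : 0 ≤ q i := hpos i (not_le.mp (Finset.mem_filter.mp hi).2)
        rw [tauF_zero_of_nonpos n (q' i - 0) (by simp [hq']; linarith) (by omega), zero_mul]
      rw [hzero, add_zero]
      refine Finset.sum_congr rfl fun i hi => ?_
      have hqi : q i < 0 := hneg i (Finset.mem_filter.mp hi).2
      have hterm : ∀ j ∈ Finset.univ.erase i,
          q i / (q i - q j) = (-q i) * (q' i - q' j)⁻¹ := by
        intro j _
        have : q' i - q' j = -(q i - q j) := by simp [hq']; ring
        rw [this, ← neg_div_neg_eq (q i) (q i - q j), div_eq_mul_inv]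
      rw [Finset.prod_congr rfl hterm, Finset.prod_mul_distrib, Finset.prod_const,
        Finset.card_erase_of_mem (Finset.mem_univ i), Finset.card_univ, Fintype.card_fin,
        Nat.add_sub_cancel, tauF_of_nonneg n (q' i - 0) (by simp [hq']; linarith)]
      simp [hq']
    rw [key]
    exact GG_bounds' n q' hinj' 0
end
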